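/- arXiv:2006.03627 — 3 statements merged into one kernel-verified Lean document; each statement's English description precedes it below -/
import Mathlib

section
/- If W_H ∈ ℝ^{P×P} is equivariant to the H-action on P and W_K ∈ ℝ^{Q×Q} is equivariant to the K-action on Q, then W = W_H ⊗ (1_Q 1_Q^⊤) + I_P ⊗ W_K is equivariant to the imprimitive action of K ≀ H on P × Q, i.e., W commutes with the permutation matrix of every element of K ≀ H. -/
open Matrix Kronecker

/-- Permutation matrix of `σ` (row convention matching `(Γ^(g)x)_n = x_{g·n}`):
entry `(i,j)` is 1 iff `j = σ i`. -/
noncomputable def permMat {n : Type*} [Fintype n] [DecidableEq n] (σ : Equiv.Perm n) :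
    Matrix n n ℝ := Matrix.of fun i j => if j = σ i then (1 : ℝ) else 0

/-- The permutation matrix `G^(g) = Σ_{p=1}^P 1_{p, h·p} ⊗ G^{(k_p)}` of the imprimitive
action of the wreath product element `g = (h, (k_p)_p) ∈ K ≀ H` on `ℝ^{PQ}`. -/
noncomputable def wreathMat {H P K Q : Type*} [Group H] [Group K]
    [Fintype P] [DecidableEq P] [Fintype Q] [DecidableEq Q]
    (ρ : H →* Equiv.Perm P) (τ : K →* Equiv.Perm Q) (h : H) (b : P → K) :
    Matrix (P × Q) (P × Q) ℝ :=
  ∑ p : P, (Matrix.single p (ρ h p) (1 : ℝ)) ⊗ₖ permMat (τ (b p))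

/-! Write `G^(g) = ∑_p E_{p,h·p} ⊗ G^(k_p)`. Permutation matrices fix `J = 1_Q 1_Qᵀ` from either
side, so against `W_H ⊗ J` the blocks `G^(k_p)` disappear and `∑_p E_{p,h·p} = G^(h)` is left, which
commutes with `W_H`. Each summand `E_{p,h·p} ⊗ G^(k_p)` commutes with `I_P ⊗ W_K` blockwise,
because `G^(k_p)` commutes with `W_K`. -/

section PermMat

variable {n : Type*} [Fintype n] [DecidableEq n]

lemma permMat_eq_toMatrix (σ : Equiv.Perm n) : permMat σ = σ.toPEquiv.toMatrix := by
  ext i j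
  simp [permMat, eq_comm]

lemma permMat_eq_sum_single (σ : Equiv.Perm n) :
    permMat σ = ∑ i, single i (σ i) (1 : ℝ) := by
  ext i j
  rw [Matrix.sum_apply, Finset.sum_eq_single i] <;>
    simp +contextual [permMat, single_apply, eq_comm]

lemma permMat_mul_vecMulVec_const_one {m : Type*} (σ : Equiv.Perm n) (v : m → ℝ) :
    permMat σ * vecMulVec (fun _ : n => (1 : ℝ)) v = vecMulVec (fun _ : n => (1 : ℝ)) v := by
  rw [permMat_eq_toMatrix, PEquiv.toMatrix_toPEquiv_mul]
  rfl

lemma vecMulVec_const_one_mul_permMat {m : Type*} (σ : Equiv.Perm n) (u : m → ℝ) :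
    vecMulVec u (fun _ : n => (1 : ℝ)) * permMat σ = vecMulVec u (fun _ : n => (1 : ℝ)) := by
  rw [permMat_eq_toMatrix, PEquiv.mul_toMatrix_toPEquiv]
  rfl

end PermMat

lemma Matrix.sum_kronecker {ι α l m n p : Type*} [Semiring α] (s : Finset ι)
    (A : ι → Matrix l m α) (B : Matrix n p α) : (∑ i ∈ s, A i) ⊗ₖ B = ∑ i ∈ s, A i ⊗ₖ B :=
  (kroneckerBilinear (R := ℕ)).map_sum₂ s A B

section WreathMat

variable {H P K Q : Type*} [Group H] [Group K] [Fintype P] [DecidableEq P]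
  [Fintype Q] [DecidableEq Q] (ρ : H →* Equiv.Perm P) (τ : K →* Equiv.Perm Q) (h : H) (b : P → K)

lemma wreathMat_mul_kronecker_vecMulVec_const_one (A : Matrix P P ℝ) (v : Q → ℝ) :
    wreathMat ρ τ h b * (A ⊗ₖ vecMulVec (fun _ : Q => (1 : ℝ)) v) =
      (permMat (ρ h) * A) ⊗ₖ vecMulVec (fun _ : Q => (1 : ℝ)) v := by
  simp only [wreathMat, Finset.sum_mul, ← mul_kronecker_mul, permMat_mul_vecMulVec_const_one]
  rw [← sum_kronecker, ← Finset.sum_mul, permMat_eq_sum_single]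

lemma kronecker_vecMulVec_const_one_mul_wreathMat (A : Matrix P P ℝ) (u : Q → ℝ) :
    (A ⊗ₖ vecMulVec u (fun _ : Q => (1 : ℝ))) * wreathMat ρ τ h b =
      (A * permMat (ρ h)) ⊗ₖ vecMulVec u (fun _ : Q => (1 : ℝ)) := by
  simp only [wreathMat, Finset.mul_sum, ← mul_kronecker_mul, vecMulVec_const_one_mul_permMat]
  rw [← sum_kronecker, ← Finset.mul_sum, permMat_eq_sum_single]

lemma wreathMat_commute_one_kronecker {C : Matrix Q Q ℝ}
    (hC : ∀ k : K, Commute (permMat (τ k)) C) :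
    Commute (wreathMat ρ τ h b) ((1 : Matrix P P ℝ) ⊗ₖ C) := by
  refine Commute.sum_left _ _ _ fun p _ => ?_
  simp only [Commute, SemiconjBy, ← mul_kronecker_mul, mul_one, one_mul, (hC (b p)).eq]

end WreathMat

/-- If `W_H` is `H`-equivariant and `W_K` is `K`-equivariant, then
`W = W_H ⊗ (1_Q 1_Q^⊤) + I_P ⊗ W_K` is equivariant to the imprimitive action of `K ≀ H` on
`P × Q`, i.e. it commutes with the permutation matrix of every element of `K ≀ H`. -/
theorem wreath_equivariant_sum
    {H P K Q : Type*} [Group H] [Group K]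
    [Fintype P] [DecidableEq P] [Fintype Q] [DecidableEq Q]
    (ρ : H →* Equiv.Perm P) (τ : K →* Equiv.Perm Q)
    (WH : Matrix P P ℝ) (WK : Matrix Q Q ℝ)
    (hWH : ∀ h : H, permMat (ρ h) * WH = WH * permMat (ρ h))
    (hWK : ∀ k : K, permMat (τ k) * WK = WK * permMat (τ k)) :
    ∀ (h : H) (b : P → K),
      wreathMat ρ τ h b *
          (WH ⊗ₖ vecMulVec (fun _ : Q => (1 : ℝ)) (fun _ : Q => (1 : ℝ)) +
            (1 : Matrix P P ℝ) ⊗ₖ WK) =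
        (WH ⊗ₖ vecMulVec (fun _ : Q => (1 : ℝ)) (fun _ : Q => (1 : ℝ)) +
            (1 : Matrix P P ℝ) ⊗ₖ WK) * wreathMat ρ τ h b := by
  intro h b
  rw [mul_add, add_mul, wreathMat_mul_kronecker_vecMulVec_const_one,
    kronecker_vecMulVec_const_one_mul_wreathMat, hWH h,
    (wreathMat_commute_one_kronecker ρ τ h b hWK).eq]
end

section
/- Let H act transitively on a set of size P with the space of H-equivariant linear maps on ℝ^P having dimension H, and let K act transitively on a set of size Q with equivariant-map space of dimension K. Then the dimension of the space of linear maps on ℝ^{PQ} equivariant to the imprimitive action of the wreath product K ≀ H equals H + K − 1. -/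
open Matrix Kronecker

/-- The space of linear maps commuting with all permutation matrices of a `G`-action. -/
noncomputable def commutantSubmodule {G N : Type*} [Group G] [Fintype N] [DecidableEq N]
    (ρ : G →* Equiv.Perm N) : Submodule ℝ (Matrix N N ℝ) :=
  ⨅ g : G, LinearMap.ker
    (LinearMap.mulLeft ℝ (permMat (ρ g)) - LinearMap.mulRight ℝ (permMat (ρ g)))

/-- The space of linear maps on `ℝ^{PQ}` commuting with the permutation matrices of the
imprimitive action of every element of the wreath product `K ≀ H`. -/
noncomputable def wreathCommutantSubmodule {H P K Q : Type*} [Group H] [Group K]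
    [Fintype P] [DecidableEq P] [Fintype Q] [DecidableEq Q]
    (ρ : H →* Equiv.Perm P) (τ : K →* Equiv.Perm Q) :
    Submodule ℝ (Matrix (P × Q) (P × Q) ℝ) :=
  ⨅ (h : H) (b : P → K), LinearMap.ker
    (LinearMap.mulLeft ℝ (wreathMat ρ τ h b) - LinearMap.mulRight ℝ (wreathMat ρ τ h b))

/-! A matrix commutes with the permutation matrix of `σ` iff its entries are invariant under
`(x, y) ↦ (σ x, σ y)`, so the commutant of a family of permutations of `N` has dimension the number
of orbits on `N × N`. For the imprimitive action of `K ≀ H` on `P × Q`, the orbit of a pair of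
points in the same block is determined by a `K`-orbit on `Q × Q`, and the orbit of a pair in
different blocks by an off-diagonal `H`-orbit on `P × P`, since the fibre coordinates in different
blocks move independently. Transitivity of `H` makes the diagonal of `P × P` a single `H`-orbit,
which is the one orbit lost in `dH + dK - 1`. -/

open Module LinearMap

section PairOrbits

variable {ι N : Type*}

/-- The classes of `Quot (PairStep σ)` are the orbits on `N × N` of the group generated by `σ`. -/
def PairStep (σ : ι → Equiv.Perm N) (x y : N × N) : Prop :=
  ∃ i, y = (σ i x.1, σ i x.2)

lemma mk_eq_mk_apply (σ : ι → Equiv.Perm N) (i : ι) (a b : N) :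
    Quot.mk (PairStep σ) (a, b) = Quot.mk (PairStep σ) (σ i a, σ i b) :=
  Quot.sound ⟨i, rfl⟩

lemma fst_eq_snd_iff_of_mk_eq {σ : ι → Equiv.Perm N} {x y : N × N}
    (h : Quot.mk (PairStep σ) x = Quot.mk (PairStep σ) y) : x.1 = x.2 ↔ y.1 = y.2 := by
  have hresp : ∀ x y : N × N, PairStep σ x y → (x.1 = x.2) = (y.1 = y.2) := by
    rintro x _ ⟨i, rfl⟩
    simp
  simpa using congrArg (Quot.lift (fun x : N × N => x.1 = x.2) hresp) h

lemma mk_diag_eq_mk_diag {σ : ι → Equiv.Perm N} (htrans : ∀ a b, ∃ i, σ i a = b) (a b : N) :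
    Quot.mk (PairStep σ) (a, a) = Quot.mk (PairStep σ) (b, b) := by
  obtain ⟨i, rfl⟩ := htrans a b
  exact mk_eq_mk_apply σ i a a

lemma mem_range_funLeft_quotMk_iff {R M : Type*} [Semiring R] [AddCommMonoid M] [Module R M]
    {r : N → N → Prop} {f : N → M} :
    f ∈ range (funLeft R M (Quot.mk r)) ↔ ∀ x y, r x y → f x = f y := by
  constructor
  · rintro ⟨g, rfl⟩ x y hxy
    exact congrArg g (Quot.sound hxy)
  · intro hf
    exact ⟨Quot.lift f hf, rfl⟩

variable [Fintype N]

lemma finrank_range_funLeft_quotMk (R : Type*) [Semiring R] [StrongRankCondition R]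
    (r : N → N → Prop) : finrank R (range (funLeft R R (Quot.mk r))) = Nat.card (Quot r) := by
  have := Fintype.ofFinite (Quot r)
  rw [finrank_range_of_inj (funLeft_injective_of_surjective R R _ Quot.mk_surjective),
    finrank_fintype_fun_eq_card, Nat.card_eq_fintype_card]

variable [DecidableEq N]

noncomputable def permCommutant (σ : ι → Equiv.Perm N) : Submodule ℝ (Matrix N N ℝ) :=
  ⨅ i, ker (mulLeft ℝ (permMat (σ i)) - mulRight ℝ (permMat (σ i)))

lemma permMat_mul_apply (σ : Equiv.Perm N) (A : Matrix N N ℝ) (i j : N) :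
    (permMat σ * A) i j = A (σ i) j := by
  simp [permMat, Matrix.mul_apply]

lemma mul_permMat_apply (σ : Equiv.Perm N) (A : Matrix N N ℝ) (i j : N) :
    (A * permMat σ) i j = A i (σ.symm j) := by
  simp [permMat, Matrix.mul_apply, ← Equiv.symm_apply_eq]

lemma mem_permCommutant_iff {σ : ι → Equiv.Perm N} {A : Matrix N N ℝ} :
    A ∈ permCommutant σ ↔ ∀ i x y, A (σ i x) (σ i y) = A x y := by
  simp only [permCommutant, Submodule.mem_iInf, mem_ker, LinearMap.sub_apply, sub_eq_zero,
    mulLeft_apply, mulRight_apply, ← Matrix.ext_iff, permMat_mul_apply, mul_permMat_apply]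
  refine forall_congr' fun i => ⟨fun h x y => ?_, fun h x y => ?_⟩
  · simpa using h x (σ i y)
  · simpa using h x ((σ i).symm y)

lemma permCommutant_eq_map_range_funLeft (σ : ι → Equiv.Perm N) :
    permCommutant σ = (range (funLeft ℝ ℝ (Quot.mk (PairStep σ)))).map
      ((LinearEquiv.curry ℝ ℝ N N).trans (Matrix.ofLinearEquiv ℝ)).toLinearMap := by
  ext A
  rw [Submodule.mem_map_equiv, mem_range_funLeft_quotMk_iff, mem_permCommutant_iff]
  constructor
  · rintro h x _ ⟨i, rfl⟩
    exact (h i x.1 x.2).symm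
  · intro h i x y
    exact (h (x, y) _ ⟨i, rfl⟩).symm

theorem finrank_permCommutant (σ : ι → Equiv.Perm N) :
    finrank ℝ (permCommutant σ) = Nat.card (Quot (PairStep σ)) := by
  rw [permCommutant_eq_map_range_funLeft, LinearEquiv.finrank_map_eq,
    finrank_range_funLeft_quotMk]

lemma finrank_commutantSubmodule {G : Type*} [Group G] (ρ : G →* Equiv.Perm N) :
    finrank ℝ (commutantSubmodule ρ) = Nat.card (Quot (PairStep ρ)) :=
  finrank_permCommutant ρ

end PairOrbits

section Wreath

variable {H P K Q : Type*} [Group H] [Group K] (ρ : H →* Equiv.Perm P) (τ : K →* Equiv.Perm Q)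

def wreathPerm (g : H × (P → K)) : Equiv.Perm (P × Q) :=
  Equiv.prodShear (ρ g.1) fun p => τ (g.2 p)

lemma wreath_mk_eq_mk (h : H) (b : P → K) (p p' : P) (q q' : Q) :
    Quot.mk (PairStep (wreathPerm ρ τ)) ((p, q), (p', q')) =
      Quot.mk _ ((ρ h p, τ (b p) q), (ρ h p', τ (b p') q')) :=
  Quot.sound ⟨(h, b), rfl⟩

section Orbits

variable [DecidableEq P]

def wreathOrbitsToSum :
    Quot (PairStep (wreathPerm ρ τ)) → Quot (PairStep τ) ⊕ Quot (PairStep ρ) :=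
  Quot.lift
    (fun x => if x.1.1 = x.2.1 then .inl (Quot.mk _ (x.1.2, x.2.2))
      else .inr (Quot.mk _ (x.1.1, x.2.1)))
    (by
      rintro ⟨⟨p, q⟩, ⟨p', q'⟩⟩ _ ⟨⟨h, b⟩, rfl⟩
      by_cases hp : p = p'
      · subst hp
        simp [wreathPerm, mk_eq_mk_apply τ (b p) q q']
      · simp [wreathPerm, hp, mk_eq_mk_apply ρ h p p'])

def sumToWreathOrbits (p₀ : P) (q₀ : Q) :
    Quot (PairStep τ) ⊕ Quot (PairStep ρ) → Quot (PairStep (wreathPerm ρ τ)) :=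
  Sum.elim
    (Quot.lift (fun y => Quot.mk _ ((p₀, y.1), (p₀, y.2))) (by
      rintro y _ ⟨k, rfl⟩
      simpa using wreath_mk_eq_mk ρ τ 1 (fun _ => k) p₀ p₀ y.1 y.2))
    (Quot.lift (fun x => Quot.mk _ ((x.1, q₀), (x.2, q₀))) (by
      rintro x _ ⟨h, rfl⟩
      simpa using wreath_mk_eq_mk ρ τ h 1 x.1 x.2 q₀ q₀))

lemma sumToWreathOrbits_wreathOrbitsToSum (hH : ∀ p p' : P, ∃ h : H, ρ h p = p')
    (hK : ∀ q q' : Q, ∃ k : K, τ k q = q') (p₀ : P) (q₀ : Q) :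
    Function.LeftInverse (sumToWreathOrbits ρ τ p₀ q₀) (wreathOrbitsToSum ρ τ) := by
  rintro ⟨⟨p, q⟩, ⟨p', q'⟩⟩
  by_cases hp : p = p'
  · subst hp
    obtain ⟨h, rfl⟩ := hH p₀ p
    simpa [wreathOrbitsToSum, sumToWreathOrbits] using wreath_mk_eq_mk ρ τ h 1 p₀ p₀ q q'
  · obtain ⟨k, rfl⟩ := hK q₀ q
    obtain ⟨k', rfl⟩ := hK q₀ q'
    simpa [wreathOrbitsToSum, sumToWreathOrbits, hp, Ne.symm hp] using
      wreath_mk_eq_mk ρ τ 1 (fun x => if x = p then k else k') p p' q₀ q₀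

lemma range_wreathOrbitsToSum [Nonempty Q] (hH : ∀ p p' : P, ∃ h : H, ρ h p = p') (p₀ : P) :
    Set.range (wreathOrbitsToSum ρ τ) = {.inr (Quot.mk _ (p₀, p₀))}ᶜ := by
  ext y
  constructor
  · rintro ⟨⟨⟨p, q⟩, ⟨p', q'⟩⟩, rfl⟩
    by_cases hp : p = p'
    · simp [wreathOrbitsToSum, hp]
    · simpa [wreathOrbitsToSum, hp] using fun h => hp ((fst_eq_snd_iff_of_mk_eq h).2 rfl)
  · intro hy
    obtain ⟨q₀⟩ := ‹Nonempty Q›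
    rcases y with ⟨q, q'⟩ | ⟨p, p'⟩
    · exact ⟨Quot.mk _ ((p₀, q), (p₀, q')), by simp [wreathOrbitsToSum]⟩
    · by_cases hp : p = p'
      · subst hp
        exact absurd (congrArg Sum.inr (mk_diag_eq_mk_diag hH p p₀)) hy
      · exact ⟨Quot.mk _ ((p, q₀), (p', q₀)), by simp [wreathOrbitsToSum, hp]⟩

end Orbits

theorem card_wreathOrbits [Finite P] [Finite Q] [Nonempty P] [Nonempty Q]
    (hH : ∀ p p' : P, ∃ h : H, ρ h p = p') (hK : ∀ q q' : Q, ∃ k : K, τ k q = q') :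
    Nat.card (Quot (PairStep (wreathPerm ρ τ))) =
      Nat.card (Quot (PairStep τ)) + Nat.card (Quot (PairStep ρ)) - 1 := by
  classical
  obtain ⟨p₀⟩ := ‹Nonempty P›
  obtain ⟨q₀⟩ := ‹Nonempty Q›
  have hinj := (sumToWreathOrbits_wreathOrbitsToSum ρ τ hH hK p₀ q₀).injective
  rw [← Nat.card_range_of_injective hinj, range_wreathOrbitsToSum ρ τ hH p₀, Nat.card_coe_set_eq,
    ← Nat.card_sum, ← Set.ncard_add_ncard_compl {Sum.inr (Quot.mk _ (p₀, p₀))},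
    Set.ncard_singleton, Nat.add_sub_cancel_left]

variable [Fintype P] [DecidableEq P] [Fintype Q] [DecidableEq Q]

lemma wreathMat_eq_permMat (h : H) (b : P → K) :
    wreathMat ρ τ h b = permMat (wreathPerm ρ τ (h, b)) := by
  ext ⟨p, q⟩ ⟨p', q'⟩
  simp only [wreathMat, Matrix.sum_apply, Matrix.kroneckerMap_apply, Matrix.single,
    Matrix.of_apply, permMat, wreathPerm, Equiv.prodShear_apply, Prod.mk.injEq, ite_mul, one_mul,
    zero_mul]
  rw [Finset.sum_eq_single p] <;> aesop

lemma wreathCommutantSubmodule_eq_permCommutant :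
    wreathCommutantSubmodule ρ τ = permCommutant (wreathPerm ρ τ) := by
  simp only [wreathCommutantSubmodule, permCommutant, wreathMat_eq_permMat, iInf_prod]

lemma finrank_wreathCommutantSubmodule :
    finrank ℝ (wreathCommutantSubmodule ρ τ) = Nat.card (Quot (PairStep (wreathPerm ρ τ))) := by
  rw [wreathCommutantSubmodule_eq_permCommutant, finrank_permCommutant]

end Wreath

/-- If the `H`- and `K`-actions are transitive and the spaces of `H`- and `K`-equivariant
maps have dimensions `H` and `K` respectively, then the space of linear maps equivariant to
the imprimitive action of `K ≀ H` has dimension `H + K − 1`. -/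
theorem finrank_wreath_commutant
    {H P K Q : Type*} [Group H] [Group K]
    [Fintype P] [DecidableEq P] [Nonempty P] [Fintype Q] [DecidableEq Q] [Nonempty Q]
    (ρ : H →* Equiv.Perm P) (τ : K →* Equiv.Perm Q)
    (hHtrans : ∀ p p' : P, ∃ h : H, ρ h p = p')
    (hKtrans : ∀ q q' : Q, ∃ k : K, τ k q = q')
    (dH dK : ℕ)
    (hdH : Module.finrank ℝ (commutantSubmodule ρ) = dH)
    (hdK : Module.finrank ℝ (commutantSubmodule τ) = dK) :
    Module.finrank ℝ (wreathCommutantSubmodule ρ τ) = dH + dK - 1 := by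
  rw [finrank_commutantSubmodule] at hdH hdK
  rw [finrank_wreathCommutantSubmodule, card_wreathOrbits ρ τ hHtrans hKtrans, hdH, hdK, add_comm]
end

section
/- Every linear map W ∈ ℝ^{PQ×PQ} equivariant to the imprimitive action of K ≀ H on P × Q can be written as W = W_H ⊗ (1_Q 1_Q^⊤) + I_P ⊗ W_K for some H-equivariant W_H ∈ ℝ^{P×P} and K-equivariant W_K ∈ ℝ^{Q×Q}, assuming the H-action on P and the K-action on Q are transitive. -/
/-!
Commuting with a permutation matrix means invariance under the permutation, entrywise. The
base group `K^P` acts independently on the fibres `{p} × Q`, so for `p ≠ p'` transitivity of `K`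
lets one move `q` and `q'` to a base point `q₀` separately: the off-diagonal blocks of `W` are
constant, which gives `W_H ⊗ 1 1ᵀ` (with `W_H` zero on the diagonal). The top group `H` permutes
the fibres transitively, so all diagonal blocks coincide, giving `I ⊗ W_K`. The equivariance of
`W_H` and `W_K` is the invariance of `W` under `H` and under constant families `b = fun _ => k`.
-/

open Matrix Kronecker

lemma permMat_eq_permMatrix {n : Type*} [Fintype n] [DecidableEq n] (σ : Equiv.Perm n) :
    permMat σ = σ.permMatrix ℝ := by
  ext i j
  simp [permMat, PEquiv.toMatrix_apply, eq_comm]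

lemma permMat_mul_eq_mul_permMat_iff {n : Type*} [Fintype n] [DecidableEq n]
    (σ : Equiv.Perm n) (W : Matrix n n ℝ) :
    permMat σ * W = W * permMat σ ↔ ∀ i j, W (σ i) (σ j) = W i j := by
  simp only [permMat_eq_permMatrix, PEquiv.toMatrix_toPEquiv_mul, PEquiv.mul_toMatrix_toPEquiv,
    ← Matrix.ext_iff, submatrix_apply, id]
  exact ⟨fun hc i j => by simpa using hc i (σ j),
    fun hc i j => by simpa using hc i (σ.symm j)⟩

lemma wreathMat_eq_permMat_prodShear {H P K Q : Type*} [Group H] [Group K]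
    [Fintype P] [DecidableEq P] [Fintype Q] [DecidableEq Q]
    (ρ : H →* Equiv.Perm P) (τ : K →* Equiv.Perm Q) (h : H) (b : P → K) :
    wreathMat ρ τ h b = permMat (Equiv.prodShear (ρ h) fun p => τ (b p)) := by
  ext ⟨p, q⟩ ⟨p', q'⟩
  simp only [wreathMat, Matrix.sum_apply, kroneckerMap_apply, single_apply, permMat, of_apply,
    Equiv.prodShear_apply, Prod.mk.injEq, ite_and, ite_mul, one_mul, zero_mul]
  simp [eq_comm]

section WreathInvariant

variable {H P K Q : Type*} [Group H] [Group K] (ρ : H →* Equiv.Perm P) (τ : K →* Equiv.Perm Q)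

def IsWreathInvariant (W : Matrix (P × Q) (P × Q) ℝ) : Prop :=
  ∀ (h : H) (b : P → K) (p p' : P) (q q' : Q),
    W (ρ h p, τ (b p) q) (ρ h p', τ (b p') q') = W (p, q) (p', q')

lemma isWreathInvariant_of_commute [Fintype P] [DecidableEq P] [Fintype Q] [DecidableEq Q]
    {W : Matrix (P × Q) (P × Q) ℝ}
    (hW : ∀ (h : H) (b : P → K), wreathMat ρ τ h b * W = W * wreathMat ρ τ h b) :
    IsWreathInvariant ρ τ W := fun h b p p' q q' => by
  have hc := hW h b
  rw [wreathMat_eq_permMat_prodShear, permMat_mul_eq_mul_permMat_iff] at hc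
  exact hc (p, q) (p', q')

variable {ρ τ} {W : Matrix (P × Q) (P × Q) ℝ} (hW : IsWreathInvariant ρ τ W)
include hW

lemma IsWreathInvariant.apply_top (h : H) (p p' : P) (q q' : Q) :
    W (ρ h p, q) (ρ h p', q') = W (p, q) (p', q') := by
  simpa using hW h 1 p p' q q'

lemma IsWreathInvariant.apply_base (b : P → K) (p p' : P) (q q' : Q) :
    W (p, τ (b p) q) (p', τ (b p') q') = W (p, q) (p', q') := by
  simpa using hW 1 b p p' q q'

lemma IsWreathInvariant.apply_of_ne (hKtrans : ∀ q q' : Q, ∃ k : K, τ k q = q')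
    {p p' : P} (hp : p ≠ p') (q q' q₀ : Q) :
    W (p, q) (p', q') = W (p, q₀) (p', q₀) := by
  classical
  obtain ⟨k, rfl⟩ := hKtrans q₀ q
  obtain ⟨k', rfl⟩ := hKtrans q₀ q'
  simpa [Function.update_of_ne hp.symm] using
    hW.apply_base (Function.update (fun _ => k') p k) p p' q₀ q₀

lemma IsWreathInvariant.apply_diag (hHtrans : ∀ p p' : P, ∃ h : H, ρ h p = p')
    (p p₀ : P) (q q' : Q) :
    W (p, q) (p, q') = W (p₀, q) (p₀, q') := by
  obtain ⟨h, rfl⟩ := hHtrans p₀ p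
  exact hW.apply_top h p₀ p₀ q q'

end WreathInvariant

/-- Assuming the `H`-action on `P` and the `K`-action on `Q` are transitive, every linear map
`W ∈ ℝ^{PQ×PQ}` equivariant to the imprimitive action of `K ≀ H` on `P × Q` can be written as
`W = W_H ⊗ (1_Q 1_Q^⊤) + I_P ⊗ W_K` with `W_H` `H`-equivariant and `W_K` `K`-equivariant. -/
theorem wreath_equivariant_decomposition
    {H P K Q : Type*} [Group H] [Group K]
    [Fintype P] [DecidableEq P] [Nonempty P] [Fintype Q] [DecidableEq Q] [Nonempty Q]
    (ρ : H →* Equiv.Perm P) (τ : K →* Equiv.Perm Q)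
    (hHtrans : ∀ p p' : P, ∃ h : H, ρ h p = p')
    (hKtrans : ∀ q q' : Q, ∃ k : K, τ k q = q')
    (W : Matrix (P × Q) (P × Q) ℝ)
    (hW : ∀ (h : H) (b : P → K), wreathMat ρ τ h b * W = W * wreathMat ρ τ h b) :
    ∃ (WH : Matrix P P ℝ) (WK : Matrix Q Q ℝ),
      (∀ h : H, permMat (ρ h) * WH = WH * permMat (ρ h)) ∧
      (∀ k : K, permMat (τ k) * WK = WK * permMat (τ k)) ∧
      W = WH ⊗ₖ vecMulVec (fun _ : Q => (1 : ℝ)) (fun _ : Q => (1 : ℝ)) +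
            (1 : Matrix P P ℝ) ⊗ₖ WK := by
  have hInv := isWreathInvariant_of_commute ρ τ hW
  obtain ⟨p₀⟩ := ‹Nonempty P›
  obtain ⟨q₀⟩ := ‹Nonempty Q›
  refine ⟨of fun p p' => if p = p' then 0 else W (p, q₀) (p', q₀),
    of fun q q' => W (p₀, q) (p₀, q'), fun h => ?_, fun k => ?_, ?_⟩
  · refine (permMat_mul_eq_mul_permMat_iff _ _).2 fun p p' => ?_
    simp [hInv.apply_top]
  · exact (permMat_mul_eq_mul_permMat_iff _ _).2 fun q q' =>
      by simpa using hInv.apply_base (fun _ => k) p₀ p₀ q q'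
  · ext ⟨p, q⟩ ⟨p', q'⟩
    by_cases hp : p = p'
    · subst hp
      simp [hInv.apply_diag hHtrans p p₀]
    · simp [hp, vecMulVec_apply, hInv.apply_of_ne hKtrans hp q q' q₀]
end
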